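/- For λ = 2, F(ψ) = k/sin²(2ψ), G(ψ) = cos(2ψ), the function I₂ = (p_r + (1/(2r)) X_L)² G is a polynomial in the momenta and satisfies {H, I₂} = 0 where H = ½p_r² + (1/r²)(½p_ψ² + F(ψ)). -/

import Mathlib

open Real

/- Phase space coordinates: `x 0 = r`, `x 1 = ψ`, `x 2 = p_r`, `x 3 = p_ψ`. -/

/-- Partial derivative with respect to the `i`-th coordinate. -/
noncomputable def pd (i : Fin 4) (f : (Fin 4 → ℝ) → ℝ) (x : Fin 4 → ℝ) : ℝ :=
  deriv (fun t => f (Function.update x i t)) (x i)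

/-- The angular Hamiltonian `L = ½ p_ψ² + F(ψ)`. -/
noncomputable def Lfun (F : ℝ → ℝ) (x : Fin 4 → ℝ) : ℝ :=
  (1/2) * (x 3)^2 + F (x 1)

/-- The Hamiltonian vector field `X_L = p_ψ ∂/∂ψ − F'(ψ) ∂/∂p_ψ` as an operator. -/
noncomputable def XL (F : ℝ → ℝ) (f : (Fin 4 → ℝ) → ℝ) (x : Fin 4 → ℝ) : ℝ :=
  x 3 * pd 1 f x - deriv F (x 1) * pd 3 f x

/-- The Hamiltonian `H = ½ p_r² + (½ p_ψ² + F(ψ))/r²`. -/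
noncomputable def Hfun (F : ℝ → ℝ) (x : Fin 4 → ℝ) : ℝ :=
  (1/2) * (x 2)^2 + (1 / (x 0)^2) * ((1/2) * (x 3)^2 + F (x 1))

/-- The operator `U = p_r + (μ/r) X_L` (multiplication by `p_r` plus `(μ/r)·X_L`). -/
noncomputable def Uop (μ : ℝ) (F : ℝ → ℝ) (f : (Fin 4 → ℝ) → ℝ) (x : Fin 4 → ℝ) : ℝ :=
  x 2 * f x + (μ / x 0) * XL F f x

/-- Standard Poisson bracket on the phase space `(r, ψ, p_r, p_ψ)`. -/
noncomputable def poisson (f g : (Fin 4 → ℝ) → ℝ) (x : Fin 4 → ℝ) : ℝ :=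
  (pd 0 f x * pd 2 g x - pd 2 f x * pd 0 g x) +
  (pd 1 f x * pd 3 g x - pd 3 f x * pd 1 g x)


/-!
Away from `sin 2ψ = 0`, `I₂ = U (U G)` agrees with the explicit function
`p_r² cos 2ψ - 2 p_r p_ψ sin 2ψ / r - p_ψ² cos 2ψ / r² - 2 k cos 2ψ / (r² sin² 2ψ)`.
The Poisson bracket at a point only sees the germ of `I₂` there, so `{H, I₂}` is a direct
computation with this closed form. The cancellation reflects the identity `X_L² G = -8 L G`,
which is where the choice `F = k / sin² 2ψ` enters.
-/

open Filter Topology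

lemma pd_congr_of_eventuallyEq {f g : (Fin 4 → ℝ) → ℝ} {x : Fin 4 → ℝ} (h : f =ᶠ[𝓝 x] g)
    (i : Fin 4) : pd i f x = pd i g x := by
  have hupdate : Tendsto (Function.update x i) (𝓝 (x i)) (𝓝 x) := by
    simpa using (continuous_const.update i continuous_id :
      Continuous fun t : ℝ => Function.update x i t).tendsto (x i)
  exact EventuallyEq.deriv_eq (hupdate.eventually h)

lemma poisson_congr_right_of_eventuallyEq {f g g' : (Fin 4 → ℝ) → ℝ} {x : Fin 4 → ℝ}
    (h : g =ᶠ[𝓝 x] g') : poisson f g x = poisson f g' x := by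
  simp only [poisson, pd_congr_of_eventuallyEq h]

section Hamiltonian

variable (F : ℝ → ℝ) (x : Fin 4 → ℝ)

lemma pd_zero_Hfun (hr : x 0 ≠ 0) : pd 0 (Hfun F) x = -2 * Lfun F x / x 0 ^ 3 := by
  simp only [pd, Hfun, Function.update_self, Function.update_of_ne, ne_eq, Fin.reduceEq,
    not_false_eq_true]
  simp [Lfun, hr]
  field_simp

lemma pd_one_Hfun (hF : DifferentiableAt ℝ F (x 1)) :
    pd 1 (Hfun F) x = deriv F (x 1) / x 0 ^ 2 := by
  simp [pd, Hfun, hF, div_eq_inv_mul]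

lemma pd_two_Hfun : pd 2 (Hfun F) x = x 2 := by
  simp [pd, Hfun]

lemma pd_three_Hfun : pd 3 (Hfun F) x = x 3 / x 0 ^ 2 := by
  simp [pd, Hfun, div_eq_inv_mul]

end Hamiltonian

lemma Uop_cos_two_mul (μ : ℝ) (F : ℝ → ℝ) :
    Uop μ F (fun z => cos (2 * z 1))
      = fun y => y 2 * cos (2 * y 1) - 2 * μ * y 3 * sin (2 * y 1) / y 0 := by
  funext y
  simp only [Uop, XL, pd, Function.update_self, Function.update_of_ne, ne_eq, Fin.reduceEq,
    not_false_eq_true]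
  simp (disch := fun_prop)
  ring

lemma Uop_Uop_cos_two_mul (μ : ℝ) (F : ℝ → ℝ) (y : Fin 4 → ℝ) :
    Uop μ F (Uop μ F (fun z => cos (2 * z 1))) y
      = y 2 ^ 2 * cos (2 * y 1) - 4 * μ * y 2 * y 3 * sin (2 * y 1) / y 0
        - 4 * μ ^ 2 * y 3 ^ 2 * cos (2 * y 1) / y 0 ^ 2
        + 2 * μ ^ 2 * deriv F (y 1) * sin (2 * y 1) / y 0 ^ 2 := by
  rw [Uop_cos_two_mul]
  simp only [Uop, XL, pd, Function.update_self, Function.update_of_ne, ne_eq, Fin.reduceEq,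
    not_false_eq_true]
  simp (disch := fun_prop)
  ring

lemma exists_Uop_Uop_cos_two_mul_eq_sum (μ : ℝ) (F : ℝ → ℝ) :
    ∃ c : ℕ → ℕ → ℝ → ℝ → ℝ, ∀ y : Fin 4 → ℝ,
      Uop μ F (Uop μ F (fun z => cos (2 * z 1))) y
        = ∑ i ∈ Finset.range 3, ∑ j ∈ Finset.range 3, c i j (y 0) (y 1) * y 2 ^ i * y 3 ^ j := by
  refine ⟨fun i j r ψ =>
    if i = 2 ∧ j = 0 then cos (2 * ψ)
    else if i = 1 ∧ j = 1 then -4 * μ * sin (2 * ψ) / r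
    else if i = 0 ∧ j = 2 then -4 * μ ^ 2 * cos (2 * ψ) / r ^ 2
    else if i = 0 ∧ j = 0 then 2 * μ ^ 2 * deriv F ψ * sin (2 * ψ) / r ^ 2
    else 0, fun y => ?_⟩
  simp [Finset.sum_range_succ, Uop_Uop_cos_two_mul]
  ring

lemma deriv_div_sin_two_mul_sq (k ψ : ℝ) (hs : sin (2 * ψ) ≠ 0) :
    deriv (fun ψ => k / sin (2 * ψ) ^ 2) ψ = -4 * k * cos (2 * ψ) / sin (2 * ψ) ^ 3 := by
  simp (disch := first | fun_prop | simp [*])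
  field_simp
  ring

noncomputable def I2fun (k : ℝ) (y : Fin 4 → ℝ) : ℝ :=
  y 2 ^ 2 * cos (2 * y 1) - 2 * y 2 * y 3 * sin (2 * y 1) / y 0
    - y 3 ^ 2 * cos (2 * y 1) / y 0 ^ 2 - 2 * k * cos (2 * y 1) / (y 0 ^ 2 * sin (2 * y 1) ^ 2)

lemma Uop_Uop_cos_two_mul_eventuallyEq_I2fun (k : ℝ) {x : Fin 4 → ℝ} (hs : sin (2 * x 1) ≠ 0) :
    Uop (1/2) (fun ψ => k / sin (2 * ψ) ^ 2) (Uop (1/2) (fun ψ => k / sin (2 * ψ) ^ 2)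
      (fun z => cos (2 * z 1))) =ᶠ[𝓝 x] I2fun k := by
  have hcont : Continuous fun y : Fin 4 → ℝ => sin (2 * y 1) := by fun_prop
  filter_upwards [hcont.continuousAt.eventually_ne hs] with y hy
  rw [Uop_Uop_cos_two_mul, deriv_div_sin_two_mul_sq k _ hy, I2fun]
  field_simp
  ring

lemma poisson_Hfun_I2fun (k : ℝ) {x : Fin 4 → ℝ} (hr : x 0 ≠ 0) (hs : sin (2 * x 1) ≠ 0) :
    poisson (Hfun fun ψ => k / sin (2 * ψ) ^ 2) (I2fun k) x = 0 := by
  have hF : DifferentiableAt ℝ (fun ψ => k / sin (2 * ψ) ^ 2) (x 1) := by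
    fun_prop (disch := simp [hs])
  rw [poisson, pd_zero_Hfun _ _ hr, pd_one_Hfun _ _ hF, pd_two_Hfun, pd_three_Hfun,
    deriv_div_sin_two_mul_sq k _ hs, Lfun]
  simp only [pd, I2fun, Function.update_self, Function.update_of_ne, ne_eq, Fin.reduceEq,
    not_false_eq_true]
  simp (disch := first | fun_prop (disch := simp [*]) | simp [*])
  field_simp
  ring

/-- For `λ = 2`, `F(ψ) = k/sin²(2ψ)`, `G(ψ) = cos(2ψ)`, the function
`I₂ = (p_r + (1/(2r))X_L)² G` is a polynomial in the momenta and satisfies `{H, I₂} = 0`. -/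
theorem first_integral_lambda_two (k : ℝ) (x : Fin 4 → ℝ)
    (hr : 0 < x 0) (hs : sin (2 * x 1) ≠ 0) :
    (∃ c : ℕ → ℕ → ℝ → ℝ → ℝ, ∀ y : Fin 4 → ℝ, 0 < y 0 → sin (2 * y 1) ≠ 0 →
      Uop (1/2) (fun ψ => k / (sin (2*ψ))^2)
          (Uop (1/2) (fun ψ => k / (sin (2*ψ))^2) (fun z => cos (2 * z 1))) y
        = ∑ i ∈ Finset.range 3, ∑ j ∈ Finset.range 3,
            c i j (y 0) (y 1) * (y 2)^i * (y 3)^j) ∧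
    poisson (Hfun (fun ψ => k / (sin (2*ψ))^2))
      (Uop (1/2) (fun ψ => k / (sin (2*ψ))^2)
        (Uop (1/2) (fun ψ => k / (sin (2*ψ))^2) (fun z => cos (2 * z 1)))) x = 0 := by
  obtain ⟨c, hc⟩ := exists_Uop_Uop_cos_two_mul_eq_sum (1/2) fun ψ => k / sin (2 * ψ) ^ 2
  refine ⟨⟨c, fun y _ _ => hc y⟩, ?_⟩
  rw [poisson_congr_right_of_eventuallyEq (Uop_Uop_cos_two_mul_eventuallyEq_I2fun k hs)]
  exact poisson_Hfun_I2fun k hr.ne' hs
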